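/- Let G be a connected Δ-regular bipartite graph on 2n vertices with second eigenvalue at most λ, and let ε ∈ (0,1) with ε ≥ λ/Δ and n ≥ 1/(2ε²Δ). Then there is no set S ⊆ V(G) with |S| > 6εn all of whose G³-connected components have size at most 2εn. -/

import Mathlib

/-!
Restrict `S` to the side `X` of the bipartition holding at least half of it. The `G³`-components
have at most `2εn` vertices each and more than `3εn` in total on `X`, so they can be sorted into
two groups `P`, `Q ⊆ X` of more than `εn/2` vertices each, with no vertex of `P` within distance
`3` of a vertex of `Q`; in particular `P` and `Q` have no common neighbour, i.e.
`⟪A 1_P, A 1_Q⟫ = 0`. On the other hand, by connectivity the eigenvectors of `A` for `±Δ` are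
constant on `X`, so `n 1_P - |P| 1_X` is orthogonal to them and `A` shrinks it by a factor `λ`.
Since `A² 1_X = Δ² 1_X`, this gives `n ⟪A 1_P, A 1_Q⟫ = Δ² |P| |Q| ± λ² n √(|P| |Q|)`, which is
positive because `λ ≤ εΔ` and `|P|, |Q| > εn/2 > ε² n`.
-/

open Finset Matrix

/-- The cube `G³` of a graph: two distinct vertices are adjacent iff their distance
in `G` is at most 3. -/
def cubeGraph {V : Type*} (G : SimpleGraph V) : SimpleGraph V where
  Adj u v := u ≠ v ∧ G.dist u v ≤ 3
  symm := by
    constructor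
    intro u v h
    exact ⟨h.1.symm, by rw [SimpleGraph.dist_comm]; exact h.2⟩
  loopless := ⟨fun v h => h.1 rfl⟩

theorem Matrix.sq_dotProduct_le {V : Type*} [Fintype V] (u v : V → ℝ) :
    (u ⬝ᵥ v) ^ 2 ≤ (u ⬝ᵥ u) * (v ⬝ᵥ v) := by
  simpa only [dotProduct, sq] using sum_mul_sq_le_sq_mul_sq univ u v

namespace Matrix.IsHermitian
variable {V : Type*} [Fintype V] [DecidableEq V] {A : Matrix V V ℝ} (hA : A.IsHermitian)
include hA

omit [DecidableEq V] in
theorem mulVec_dotProduct (u v : V → ℝ) : (A *ᵥ u) ⬝ᵥ v = u ⬝ᵥ (A *ᵥ v) := by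
  rw [dotProduct_comm, dotProduct_mulVec, ← mulVec_transpose, (isHermitian_iff_isSymm.1 hA).eq,
    dotProduct_comm]

theorem sum_sq_dotProduct_eigenvectorBasis (w : V → ℝ) :
    ∑ i, (w ⬝ᵥ ⇑(hA.eigenvectorBasis i)) ^ 2 = w ⬝ᵥ w := by
  have := (hA.eigenvectorBasis).sum_sq_inner_right (WithLp.toLp 2 w)
  rw [← real_inner_self_eq_norm_sq, EuclideanSpace.inner_eq_star_dotProduct] at this
  simpa [EuclideanSpace.inner_eq_star_dotProduct] using this

theorem mulVec_dotProduct_mulVec_self_le {c : ℝ} {w : V → ℝ}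
    (hw : ∀ i, w ⬝ᵥ ⇑(hA.eigenvectorBasis i) ≠ 0 → |hA.eigenvalues i| ≤ c) :
    (A *ᵥ w) ⬝ᵥ (A *ᵥ w) ≤ c ^ 2 * (w ⬝ᵥ w) := by
  rw [← hA.sum_sq_dotProduct_eigenvectorBasis, ← hA.sum_sq_dotProduct_eigenvectorBasis,
    Finset.mul_sum]
  refine Finset.sum_le_sum fun i _ => ?_
  rw [hA.mulVec_dotProduct, hA.mulVec_eigenvectorBasis, dotProduct_smul, smul_eq_mul, mul_pow]
  by_cases h : w ⬝ᵥ ⇑(hA.eigenvectorBasis i) = 0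
  · simp [h]
  · exact mul_le_mul_of_nonneg_right (sq_le_sq' (abs_le.1 (hw i h)).1 (abs_le.1 (hw i h)).2)
      (sq_nonneg _)

end Matrix.IsHermitian

namespace Finset
variable {V : Type*} [Fintype V] [DecidableEq V]

theorem indicator_one_dotProduct (P : Finset V) (f : V → ℝ) :
    (P : Set V).indicator 1 ⬝ᵥ f = ∑ u ∈ P, f u := by
  simp [dotProduct, Set.indicator_apply]

/-- The component of `1_P` orthogonal to `1_X`, scaled by `#X`. -/
noncomputable def centeredIndicator (X P : Finset V) : V → ℝ :=
  (#X : ℝ) • (P : Set V).indicator 1 - (#P : ℝ) • (X : Set V).indicator 1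

theorem centeredIndicator_dotProduct_eq_zero {X P : Finset V} (hP : P ⊆ X) {f : V → ℝ}
    (hf : ∀ u ∈ X, ∀ v ∈ X, f u = f v) : centeredIndicator X P ⬝ᵥ f = 0 := by
  rcases X.eq_empty_or_nonempty with rfl | ⟨u₀, hu₀⟩
  · simp [subset_empty.1 hP, centeredIndicator]
  simp only [centeredIndicator, sub_dotProduct, smul_dotProduct, indicator_one_dotProduct,
    sum_congr rfl fun u hu => hf u (hP hu) u₀ hu₀, sum_congr rfl fun u hu => hf u hu u₀ hu₀,
    sum_const, nsmul_eq_mul, smul_eq_mul]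
  ring

theorem indicator_one_dotProduct_indicator_one (P Q : Finset V) :
    (P : Set V).indicator (1 : V → ℝ) ⬝ᵥ (Q : Set V).indicator 1 = #(P ∩ Q) := by
  simp [dotProduct, Set.indicator_apply, ← ite_and, ← mem_inter, inter_comm]

theorem centeredIndicator_dotProduct_self_le {X P : Finset V} (hP : P ⊆ X) :
    centeredIndicator X P ⬝ᵥ centeredIndicator X P ≤ (#X : ℝ) ^ 2 * #P := by
  simp only [centeredIndicator, sub_dotProduct, dotProduct_sub, smul_dotProduct, dotProduct_smul,
    indicator_one_dotProduct_indicator_one, inter_eq_left.2 hP, inter_eq_right.2 hP, inter_self,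
    smul_eq_mul]
  nlinarith [Nat.cast_nonneg (α := ℝ) #P, Nat.cast_nonneg (α := ℝ) #X]

end Finset

namespace SimpleGraph
variable {V : Type*} [Fintype V] [DecidableEq V] {G : SimpleGraph V} [DecidableRel G.Adj]
  {Δ : ℕ} {X : Finset V} {c : ℝ}

omit [DecidableRel G.Adj] in
theorem IsBipartiteWith.mem_iff_notMem_of_adj (hbip : G.IsBipartiteWith ↑X ↑Xᶜ) {u w : V}
    (h : G.Adj u w) : w ∈ X ↔ u ∉ X := by
  rcases hbip.mem_of_adj h with ⟨hu, hw⟩ | ⟨hu, hw⟩ <;> simp_all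

theorem adjMatrix_mulVec_indicator (hbip : G.IsBipartiteWith ↑X ↑Xᶜ)
    (hreg : G.IsRegularOfDegree Δ) :
    G.adjMatrix ℝ *ᵥ (X : Set V).indicator 1 = (Δ : ℝ) • (↑Xᶜ : Set V).indicator 1 := by
  ext u
  have hN : ∀ w ∈ G.neighborFinset u, (X : Set V).indicator (1 : V → ℝ) w =
      if u ∈ X then 0 else 1 := fun w hw => by
    simp [Set.indicator_apply, hbip.mem_iff_notMem_of_adj ((mem_neighborFinset _ _ _).1 hw)]
  rw [adjMatrix_mulVec_apply, sum_congr rfl hN, sum_const, card_neighborFinset_eq_degree,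
    hreg.degree_eq]
  by_cases hu : u ∈ X <;> simp [hu]

theorem eq_of_adjMatrix_mulVec_eq_smul (hconn : G.Connected) (hreg : G.IsRegularOfDegree Δ)
    {f : V → ℝ} (hf : G.adjMatrix ℝ *ᵥ f = (Δ : ℝ) • f) (u v : V) : f u = f v := by
  have hlap : G.lapMatrix ℝ *ᵥ f = 0 := by
    ext w
    rw [lapMatrix_mulVec_apply, ← adjMatrix_mulVec_apply, hf, hreg.degree_eq]
    simp
  exact (lapMatrix_mulVec_eq_zero_iff_forall_reachable G).1 hlap u v (hconn u v)

theorem eq_of_adjMatrix_mulVec_eq_neg_smul (hconn : G.Connected)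
    (hbip : G.IsBipartiteWith ↑X ↑Xᶜ) (hreg : G.IsRegularOfDegree Δ) {f : V → ℝ}
    (hf : G.adjMatrix ℝ *ᵥ f = (-Δ : ℝ) • f) {u v : V} (hu : u ∈ X) (hv : v ∈ X) :
    f u = f v := by
  -- flipping the sign of `f` on `Xᶜ` turns it into an eigenvector for `Δ`
  set σ : V → ℝ := fun u => if u ∈ X then 1 else -1
  have hσ {u w : V} (h : G.Adj u w) : σ w = -σ u := by
    by_cases hu : u ∈ X <;> simp [σ, hbip.mem_iff_notMem_of_adj h, hu]
  have hg : G.adjMatrix ℝ *ᵥ (σ * f) = (Δ : ℝ) • (σ * f) := by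
    ext u
    rw [adjMatrix_mulVec_apply, sum_congr rfl fun w hw =>
      by rw [Pi.mul_apply, hσ ((mem_neighborFinset _ _ _).1 hw)], ← mul_sum,
      ← adjMatrix_mulVec_apply, hf]
    simp only [Pi.smul_apply, Pi.mul_apply, smul_eq_mul]
    ring
  simpa [σ, hu, hv] using eq_of_adjMatrix_mulVec_eq_smul hconn hreg hg u v

theorem adjMatrix_mulVec_adjMatrix_mulVec_indicator (hbip : G.IsBipartiteWith ↑X ↑Xᶜ)
    (hreg : G.IsRegularOfDegree Δ) :
    G.adjMatrix ℝ *ᵥ (G.adjMatrix ℝ *ᵥ (X : Set V).indicator 1) =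
      ((Δ : ℝ) ^ 2) • (X : Set V).indicator 1 := by
  have hbip' : G.IsBipartiteWith ↑Xᶜ ↑Xᶜᶜ := by rw [compl_compl]; exact hbip.symm
  rw [adjMatrix_mulVec_indicator hbip hreg, mulVec_smul, adjMatrix_mulVec_indicator hbip' hreg,
    compl_compl, smul_smul, sq]

theorem adjMatrix_mulVec_centeredIndicator_dotProduct (hbip : G.IsBipartiteWith ↑X ↑Xᶜ)
    (hreg : G.IsRegularOfDegree Δ) {P Q : Finset V} (hP : P ⊆ X) (hQ : Q ⊆ X) :
    (G.adjMatrix ℝ *ᵥ centeredIndicator X P) ⬝ᵥ (G.adjMatrix ℝ *ᵥ centeredIndicator X Q) =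
      #X * (#X * ((G.adjMatrix ℝ *ᵥ (P : Set V).indicator 1) ⬝ᵥ
        (G.adjMatrix ℝ *ᵥ (Q : Set V).indicator 1)) - Δ ^ 2 * #P * #Q) := by
  have hA := G.isHermitian_adjMatrix ℝ
  have hX (u : V → ℝ) : (G.adjMatrix ℝ *ᵥ u) ⬝ᵥ (G.adjMatrix ℝ *ᵥ (X : Set V).indicator 1) =
      Δ ^ 2 * (u ⬝ᵥ (X : Set V).indicator 1) := by
    rw [hA.mulVec_dotProduct, adjMatrix_mulVec_adjMatrix_mulVec_indicator hbip hreg,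
      dotProduct_smul, smul_eq_mul]
  have hX' (u : V → ℝ) : (G.adjMatrix ℝ *ᵥ (X : Set V).indicator 1) ⬝ᵥ (G.adjMatrix ℝ *ᵥ u) =
      Δ ^ 2 * ((X : Set V).indicator 1 ⬝ᵥ u) := by
    rw [dotProduct_comm, hX, dotProduct_comm]
  simp only [centeredIndicator, mulVec_sub, mulVec_smul, sub_dotProduct, dotProduct_sub,
    smul_dotProduct, dotProduct_smul, hX, hX', indicator_one_dotProduct_indicator_one,
    inter_eq_left.2 hP, inter_eq_right.2 hQ, inter_self, smul_eq_mul]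
  ring

theorem abs_eigenvalues_le_of_centeredIndicator_dotProduct_ne_zero (hconn : G.Connected)
    (hbip : G.IsBipartiteWith ↑X ↑Xᶜ) (hreg : G.IsRegularOfDegree Δ)
    (hspec : ∀ μ ∈ spectrum ℝ (G.adjMatrix ℝ), μ ≠ Δ → μ ≠ -Δ → |μ| ≤ c)
    {P : Finset V} (hP : P ⊆ X) (i : V)
    (hi : centeredIndicator X P ⬝ᵥ ⇑((G.isHermitian_adjMatrix ℝ).eigenvectorBasis i) ≠ 0) :
    |(G.isHermitian_adjMatrix ℝ).eigenvalues i| ≤ c := by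
  have hA := G.isHermitian_adjMatrix ℝ
  have hb := hA.mulVec_eigenvectorBasis i
  refine hspec _ (hA.eigenvalues_mem_spectrum_real i) (fun h => hi ?_) (fun h => hi ?_)
  · rw [h] at hb
    exact centeredIndicator_dotProduct_eq_zero hP fun u _ v _ =>
      eq_of_adjMatrix_mulVec_eq_smul hconn hreg hb u v
  · rw [h] at hb
    exact centeredIndicator_dotProduct_eq_zero hP fun u hu v hv =>
      eq_of_adjMatrix_mulVec_eq_neg_smul hconn hbip hreg hb hu hv

theorem sq_card_mul_adjMatrix_mulVec_indicator_dotProduct_sub_le (hconn : G.Connected)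
    (hbip : G.IsBipartiteWith ↑X ↑Xᶜ) (hreg : G.IsRegularOfDegree Δ)
    (hspec : ∀ μ ∈ spectrum ℝ (G.adjMatrix ℝ), μ ≠ Δ → μ ≠ -Δ → |μ| ≤ c)
    {P Q : Finset V} (hP : P ⊆ X) (hQ : Q ⊆ X) :
    (#X * ((G.adjMatrix ℝ *ᵥ (P : Set V).indicator 1) ⬝ᵥ
      (G.adjMatrix ℝ *ᵥ (Q : Set V).indicator 1)) - Δ ^ 2 * #P * #Q) ^ 2 ≤
      c ^ 4 * #X ^ 2 * #P * #Q := by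
  rcases X.eq_empty_or_nonempty with rfl | hXne
  · simp [subset_empty.1 hP, subset_empty.1 hQ]
  have hA := G.isHermitian_adjMatrix ℝ
  have hbound {P : Finset V} (hP : P ⊆ X) :
      (G.adjMatrix ℝ *ᵥ centeredIndicator X P) ⬝ᵥ (G.adjMatrix ℝ *ᵥ centeredIndicator X P) ≤
        c ^ 2 * (#X ^ 2 * #P) :=
    (hA.mulVec_dotProduct_mulVec_self_le
      (abs_eigenvalues_le_of_centeredIndicator_dotProduct_ne_zero hconn hbip hreg hspec hP)).trans
      (mul_le_mul_of_nonneg_left (centeredIndicator_dotProduct_self_le hP) (sq_nonneg c))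
  have hcs := (sq_dotProduct_le (G.adjMatrix ℝ *ᵥ centeredIndicator X P)
    (G.adjMatrix ℝ *ᵥ centeredIndicator X Q)).trans
    (mul_le_mul (hbound hP) (hbound hQ) (sum_nonneg fun _ _ => mul_self_nonneg _)
      (by positivity))
  rw [adjMatrix_mulVec_centeredIndicator_dotProduct hbip hreg hP hQ] at hcs
  have hX : (0 : ℝ) < #X ^ 2 := by positivity
  refine le_of_mul_le_mul_left ?_ hX
  linear_combination hcs

omit [DecidableEq V] in
theorem exists_mem_adj_of_adjMatrix_mulVec_indicator_ne_zero {P : Finset V} {w : V}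
    (h : (G.adjMatrix ℝ *ᵥ (P : Set V).indicator 1) w ≠ 0) : ∃ u ∈ P, G.Adj w u := by
  rw [adjMatrix_mulVec_apply] at h
  obtain ⟨u, hu, hPu⟩ := exists_ne_zero_of_sum_ne_zero h
  exact ⟨u, by simpa using Set.mem_of_indicator_ne_zero hPu, (mem_neighborFinset _ _ _).1 hu⟩

omit [DecidableEq V] in
theorem exists_adj_adj_of_adjMatrix_mulVec_indicator_dotProduct_pos {P Q : Finset V}
    (h : 0 < (G.adjMatrix ℝ *ᵥ (P : Set V).indicator 1) ⬝ᵥ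
      (G.adjMatrix ℝ *ᵥ (Q : Set V).indicator 1)) :
    ∃ u ∈ P, ∃ v ∈ Q, ∃ w, G.Adj u w ∧ G.Adj w v := by
  obtain ⟨w, -, hw⟩ := exists_ne_zero_of_sum_ne_zero h.ne'
  obtain ⟨u, hu, hwu⟩ :=
    exists_mem_adj_of_adjMatrix_mulVec_indicator_ne_zero (left_ne_zero_of_mul hw)
  obtain ⟨v, hv, hwv⟩ :=
    exists_mem_adj_of_adjMatrix_mulVec_indicator_ne_zero (right_ne_zero_of_mul hw)
  exact ⟨u, hu, v, hv, w, hwu.symm, hwv⟩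

theorem exists_adj_adj_of_isBipartiteWith (hconn : G.Connected)
    (hbip : G.IsBipartiteWith ↑X ↑Xᶜ) (hreg : G.IsRegularOfDegree Δ)
    (hspec : ∀ μ ∈ spectrum ℝ (G.adjMatrix ℝ), μ ≠ Δ → μ ≠ -Δ → |μ| ≤ c)
    {P Q : Finset V} (hP : P ⊆ X) (hQ : Q ⊆ X) (hPQ : (c ^ 2 * #X) ^ 2 < Δ ^ 4 * #P * #Q) :
    ∃ u ∈ P, ∃ v ∈ Q, ∃ w, G.Adj u w ∧ G.Adj w v := by
  refine exists_adj_adj_of_adjMatrix_mulVec_indicator_dotProduct_pos ?_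
  have hmix := sq_card_mul_adjMatrix_mulVec_indicator_dotProduct_sub_le hconn hbip hreg hspec hP hQ
  set Z := (G.adjMatrix ℝ *ᵥ (P : Set V).indicator 1) ⬝ᵥ (G.adjMatrix ℝ *ᵥ (Q : Set V).indicator 1)
  have hpq : (0 : ℝ) < #P * #Q := by
    refine pos_of_mul_pos_right (a := (Δ : ℝ) ^ 4) ?_ (by positivity)
    linarith [mul_assoc ((Δ : ℝ) ^ 4) #P #Q, sq_nonneg (c ^ 2 * #X)]
  have hD : c ^ 4 * #X ^ 2 * #P * #Q < (Δ ^ 2 * #P * #Q : ℝ) ^ 2 := by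
    linear_combination mul_lt_mul_of_pos_right hPQ hpq
  by_contra! hZ
  have hle : (Δ ^ 2 * #P * #Q : ℝ) ≤ Δ ^ 2 * #P * #Q - #X * Z := by
    linarith [mul_nonpos_of_nonneg_of_nonpos (Nat.cast_nonneg (α := ℝ) #X) hZ]
  have hsq := pow_le_pow_left₀ (by positivity) hle 2
  rw [← neg_sub, neg_sq] at hsq
  linarith

end SimpleGraph

theorem exists_finset_lt_sum_and_lt_sum_compl {ι : Type*} [Fintype ι] [DecidableEq ι]
    (f : ι → ℝ) {m M : ℝ} (hm : 0 ≤ m) (hM : 0 ≤ M) (hf : ∀ i, f i ≤ M)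
    (htot : 2 * m + M < ∑ i, f i) :
    ∃ J : Finset ι, m < ∑ i ∈ J, f i ∧ m < ∑ i ∈ Jᶜ, f i := by
  -- a smallest `J` with `m < ∑ J f` overshoots `m` by at most one term, hence by at most `M`
  obtain ⟨J, hJ, hJmin⟩ := (univ.filter fun J : Finset ι => m < ∑ i ∈ J, f i).exists_min_image
    card ⟨univ, mem_filter.2 ⟨mem_univ _, by linarith⟩⟩
  rw [mem_filter] at hJ
  obtain ⟨i, hi⟩ : J.Nonempty := nonempty_of_sum_ne_zero (f := f) (by linarith [hJ.2])
  have herase : ∑ j ∈ J.erase i, f j ≤ m := by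
    by_contra! h
    have := hJmin _ (mem_filter.2 ⟨mem_univ _, h⟩)
    have := card_erase_lt_of_mem hi
    omega
  have hsplit := sum_erase_add J f hi
  have hcompl := sum_add_sum_compl J f
  refine ⟨J, hJ.2, ?_⟩
  linarith [hf i]

theorem SimpleGraph.exists_separated_subsets_of_card_supp_le {W : Type*} [Fintype W]
    [DecidableEq W] (H : SimpleGraph W) (T : Finset W) {m M : ℝ} (hm : 0 ≤ m) (hM₀ : 0 ≤ M)
    (hM : ∀ C : H.ConnectedComponent, (Nat.card C.supp : ℝ) ≤ M) (hT : 2 * m + M < #T) :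
    ∃ P ⊆ T, ∃ Q ⊆ T, m < #P ∧ m < #Q ∧
      ∀ u ∈ P, ∀ v ∈ Q, H.connectedComponentMk u ≠ H.connectedComponentMk v := by
  classical
  have : Fintype H.ConnectedComponent := Fintype.ofFinite _
  set f : H.ConnectedComponent → ℝ := fun C => #{u ∈ T | H.connectedComponentMk u = C}
  have hfM (C) : f C ≤ M := by
    refine le_trans ?_ (hM C)
    have hsub : (↑{u ∈ T | H.connectedComponentMk u = C} : Set W) ⊆ C.supp := fun u hu =>
      (mem_filter.1 hu).2
    have := Nat.card_mono (Set.toFinite _) hsub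
    rw [Nat.card_coe_set_eq, Set.ncard_coe_finset] at this
    simp only [f]
    exact_mod_cast this
  have hsum (J : Finset H.ConnectedComponent) :
      ∑ C ∈ J, f C = #{u ∈ T | H.connectedComponentMk u ∈ J} := by
    simp only [f]
    exact_mod_cast sum_card_fiberwise_eq_card_filter T J _
  obtain ⟨J, hJ, hJc⟩ := exists_finset_lt_sum_and_lt_sum_compl f hm hM₀ hfM
    (by rw [hsum univ]; simpa using hT)
  refine ⟨_, filter_subset _ T, _, filter_subset _ T, (hsum J) ▸ hJ, (hsum Jᶜ) ▸ hJc, ?_⟩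
  intro u hu v hv huv
  rw [mem_filter] at hu hv
  exact mem_compl.1 hv.2 (huv ▸ hu.2)

theorem SimpleGraph.exists_separated_subsets_of_induce {V : Type*} [Fintype V] [DecidableEq V]
    (K : SimpleGraph V) {S T : Finset V} (hTS : T ⊆ S) {m M : ℝ} (hm : 0 ≤ m) (hM₀ : 0 ≤ M)
    (hM : ∀ C : (K.induce (S : Set V)).ConnectedComponent, (Nat.card C.supp : ℝ) ≤ M)
    (hT : 2 * m + M < #T) :
    ∃ P ⊆ T, ∃ Q ⊆ T, m < #P ∧ m < #Q ∧ ∀ u ∈ P, ∀ v ∈ Q, u ≠ v ∧ ¬ K.Adj u v := by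
  let e := Function.Embedding.subtype (· ∈ (S : Set V))
  have hTe : #(T.subtype (· ∈ (S : Set V))) = #T := by
    rw [card_subtype]
    exact congrArg card (filter_true_of_mem fun u hu => mem_coe.2 (hTS hu))
  obtain ⟨P, hP, Q, hQ, hPm, hQm, hPQ⟩ :=
    (K.induce (S : Set V)).exists_separated_subsets_of_card_supp_le _ hm hM₀ hM (hTe ▸ hT)
  refine ⟨P.map e, fun u hu => ?_, Q.map e, fun u hu => ?_, by simpa using hPm, by simpa using hQm,
    ?_⟩
  · obtain ⟨u, hu', rfl⟩ := mem_map.1 hu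
    exact mem_subtype.1 (hP hu')
  · obtain ⟨u, hu', rfl⟩ := mem_map.1 hu
    exact mem_subtype.1 (hQ hu')
  simp only [forall_mem_map]
  intro u hu v hv
  refine ⟨fun huv => hPQ u hu v hv (congrArg _ (Subtype.ext huv)), fun hadj => ?_⟩
  exact hPQ u hu v hv (SimpleGraph.ConnectedComponent.sound
    (SimpleGraph.Adj.reachable (G := K.induce (S : Set V)) hadj))

theorem cubeGraph_adj_of_adj_of_adj {V : Type*} {G : SimpleGraph V} {u v w : V} (huv : u ≠ v)
    (huw : G.Adj u w) (hwv : G.Adj w v) : (cubeGraph G).Adj u v :=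
  ⟨huv, (SimpleGraph.dist_le (huw.toWalk.append hwv.toWalk)).trans (by simp)⟩

theorem SimpleGraph.exists_isBipartiteWith_card_le_two_mul_card_inter {n : ℕ}
    {G : SimpleGraph (Fin n ⊕ Fin n)}
    (hbip : ∀ a b : Fin n, ¬ G.Adj (.inl a) (.inl b) ∧ ¬ G.Adj (.inr a) (.inr b))
    (S : Finset (Fin n ⊕ Fin n)) :
    ∃ X : Finset (Fin n ⊕ Fin n), G.IsBipartiteWith ↑X ↑Xᶜ ∧ #X = n ∧ #S ≤ 2 * #(S ∩ X) := by
  set L : Finset (Fin n ⊕ Fin n) := univ.map .inl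
  have hL : G.IsBipartiteWith ↑L ↑Lᶜ := by
    refine ⟨by rw [coe_compl]; exact disjoint_compl_right, ?_⟩
    rintro (a | a) (b | b) h
    · exact absurd h (hbip a b).1
    · simp [L]
    · simp [L]
    · exact absurd h (hbip a b).2
  have hLc : G.IsBipartiteWith ↑Lᶜ ↑Lᶜᶜ := by rw [compl_compl]; exact hL.symm
  have hLn : #L = n := by simp [L]
  have hLcn : #Lᶜ = n := by rw [card_compl, hLn]; simp
  have hS : #(S ∩ L) + #(S ∩ Lᶜ) = #S := by
    rw [← sdiff_eq_inter_compl, card_inter_add_card_sdiff]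
  by_cases h : #S ≤ 2 * #(S ∩ L)
  · exact ⟨L, hL, hLn, h⟩
  · exact ⟨Lᶜ, hLc, hLcn, by omega⟩

theorem stmt14_general (n Δ : ℕ) (lam ε : ℝ) (hΔ : 3 ≤ Δ) (hε0 : 0 < ε) (hεlam : lam / Δ ≤ ε)
    (G : SimpleGraph (Fin n ⊕ Fin n)) [DecidableRel G.Adj]
    (hconn : G.Connected)
    (hbip : ∀ a b : Fin n, ¬ G.Adj (Sum.inl a) (Sum.inl b) ∧ ¬ G.Adj (Sum.inr a) (Sum.inr b))
    (hreg : ∀ v, G.degree v = Δ)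
    (hspec : ∀ μ ∈ spectrum ℝ (G.adjMatrix ℝ), μ ≠ (Δ : ℝ) → μ ≠ -(Δ : ℝ) → |μ| ≤ lam) :
    ¬ ∃ S : Finset (Fin n ⊕ Fin n),
        6 * ε * n < (S.card : ℝ) ∧
        ∀ C : ((cubeGraph G).induce (S : Set (Fin n ⊕ Fin n))).ConnectedComponent,
          (Nat.card C.supp : ℝ) ≤ 2 * ε * n := by
  rintro ⟨S, hS, hcomp⟩
  have hΔ0 : (0 : ℝ) < Δ := by exact_mod_cast (by omega : 0 < Δ)
  have hsmall (μ) (hμ : μ ∈ spectrum ℝ (G.adjMatrix ℝ)) (h₁ : μ ≠ Δ) (h₂ : μ ≠ -Δ) :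
      |μ| ≤ ε * Δ := (hspec μ hμ h₁ h₂).trans ((div_le_iff₀ hΔ0).1 hεlam)
  have hSn : (#S : ℝ) ≤ 2 * n := by
    exact_mod_cast (card_le_univ S).trans_eq (by simp [two_mul])
  obtain ⟨X, hX, hXn, hSX⟩ := G.exists_isBipartiteWith_card_le_two_mul_card_inter hbip S
  have hSX' : (#S : ℝ) ≤ 2 * #(S ∩ X) := by exact_mod_cast hSX
  obtain ⟨P, hP, Q, hQ, hPm, hQm, hPQ⟩ := (cubeGraph G).exists_separated_subsets_of_induce
    (inter_subset_left : S ∩ X ⊆ S) (m := ε * n / 2) (by positivity) (by positivity) hcomp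
    (by linarith)
  have hPQcard : (ε ^ 2 * n) ^ 2 < (#P : ℝ) * #Q := by
    have hn : (0 : ℝ) < n := by nlinarith
    have hε : ε ^ 2 * n < ε * n / 2 := by nlinarith
    rw [sq]
    exact mul_lt_mul'' (hε.trans hPm) (hε.trans hQm) (by positivity) (by positivity)
  obtain ⟨u, hu, v, hv, w, huw, hwv⟩ := G.exists_adj_adj_of_isBipartiteWith hconn hX hreg hsmall
    (hP.trans inter_subset_right) (hQ.trans inter_subset_right) (by
      rw [hXn]
      nlinarith [pow_pos hΔ0 4])
  exact (hPQ u hu v hv).2 (cubeGraph_adj_of_adj_of_adj (hPQ u hu v hv).1 huw hwv)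

/-- Lemma on aggregate size of `G³`-small-component sets in bipartite expanders:
no set of size `> 6εn` has all of its `G³`-connected components of size `≤ 2εn`. -/
theorem stmt14 (n Δ : ℕ) (lam ε : ℝ) (hn : 0 < n) (hΔ : 3 ≤ Δ) (hlam0 : 0 < lam)
    (hlamΔ : lam < Δ) (hε0 : 0 < ε) (hε1 : ε < 1) (hεlam : lam / Δ ≤ ε)
    (hnbig : 1 / (2 * ε ^ 2 * Δ) ≤ (n : ℝ))
    (G : SimpleGraph (Fin n ⊕ Fin n)) [DecidableRel G.Adj]
    (hconn : G.Connected)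
    (hbip : ∀ a b : Fin n, ¬ G.Adj (Sum.inl a) (Sum.inl b) ∧ ¬ G.Adj (Sum.inr a) (Sum.inr b))
    (hreg : ∀ v, G.degree v = Δ)
    (hspec : ∀ μ ∈ spectrum ℝ (G.adjMatrix ℝ), μ ≠ (Δ : ℝ) → μ ≠ -(Δ : ℝ) → |μ| ≤ lam) :
    ¬ ∃ S : Finset (Fin n ⊕ Fin n),
        6 * ε * n < (S.card : ℝ) ∧
        ∀ C : ((cubeGraph G).induce (S : Set (Fin n ⊕ Fin n))).ConnectedComponent,
          (Nat.card C.supp : ℝ) ≤ 2 * ε * n :=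
  stmt14_general n Δ lam ε hΔ hε0 hεlam G hconn hbip hreg hspec
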